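/- arXiv:1502.06240 — 6 statements merged into one kernel-verified Lean document; each statement's English description precedes it below -/
import Mathlib

section
/- Let (μ_n) be a sequence of nonnegative real numbers satisfying μ_{n+1} ≤ (1 − φ_n) μ_n + φ_n ε_n for all n, where (φ_n) is a sequence in [0,1] with Σ_{n=1}^∞ φ_n = ∞ and (ε_n) is a real sequence with limsup_{n→∞} ε_n ≤ 0. Then lim_{n→∞} μ_n = 0. -/
open Filter Topology Finset

/-! Once `ε n < c`, the recursion gives `μ (n+1) - c ≤ (1 - φ n) (μ n - c)`, so `μ n - c` is
eventually bounded by a tail product `∏ (1 - φ k) ≤ exp (-∑ φ k)`, which tends to `0` because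
`∑ φ k = ∞`. Hence `μ n < a` eventually for every `a > c`, and `c > 0` is arbitrary. -/

lemma prod_one_sub_le_exp_neg_sum {ι : Type*} (s : Finset ι) {φ : ι → ℝ}
    (hφ : ∀ i ∈ s, φ i ≤ 1) :
    ∏ i ∈ s, (1 - φ i) ≤ Real.exp (-∑ i ∈ s, φ i) := by
  rw [← sum_neg_distrib, Real.exp_sum]
  exact prod_le_prod (fun i hi => sub_nonneg.2 (hφ i hi)) fun i _ => Real.one_sub_le_exp_neg (φ i)

lemma tendsto_prod_Ico_one_sub_of_not_summable {φ : ℕ → ℝ} (hφ : ∀ n, φ n ∈ Set.Icc (0:ℝ) 1)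
    (hsum : ¬ Summable φ) (N : ℕ) :
    Tendsto (fun n => ∏ k ∈ Ico N n, (1 - φ k)) atTop (𝓝 0) := by
  have hsum_Ico : Tendsto (fun n => ∑ k ∈ Ico N n, φ k) atTop atTop := by
    refine (((not_summable_iff_tendsto_nat_atTop_of_nonneg fun n => (hφ n).1).1 hsum).atTop_add
      (tendsto_const_nhds (x := -∑ k ∈ range N, φ k))).congr' ?_
    filter_upwards [eventually_ge_atTop N] with n hn
    rw [sum_Ico_eq_sub _ hn, sub_eq_add_neg]
  exact squeeze_zero (fun n => prod_nonneg fun k _ => sub_nonneg.2 (hφ k).2)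
    (fun n => prod_one_sub_le_exp_neg_sum _ fun k _ => (hφ k).2)
    (Real.tendsto_exp_atBot.comp (tendsto_neg_atTop_atBot.comp hsum_Ico))

lemma sub_le_prod_one_sub_mul_sub {μ φ : ℕ → ℝ} {c : ℝ} {N : ℕ} (hφ : ∀ n, φ n ≤ 1)
    (hrec : ∀ n ≥ N, μ (n + 1) ≤ (1 - φ n) * μ n + φ n * c) {n : ℕ} (hn : N ≤ n) :
    μ n - c ≤ (∏ k ∈ Ico N n, (1 - φ k)) * (μ N - c) := by
  induction n, hn using Nat.le_induction with
  | base => simp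
  | succ n hn ih =>
    rw [prod_Ico_succ_top hn, mul_comm _ (1 - φ n), mul_assoc]
    calc μ (n + 1) - c ≤ (1 - φ n) * (μ n - c) := by linarith [hrec n hn]
      _ ≤ _ := mul_le_mul_of_nonneg_left ih (sub_nonneg.2 (hφ n))

lemma eventually_lt_of_eventually_le_one_sub_mul_add {μ φ : ℕ → ℝ} {c a : ℝ}
    (hφ : ∀ n, φ n ∈ Set.Icc (0:ℝ) 1) (hsum : ¬ Summable φ)
    (hrec : ∀ᶠ n in atTop, μ (n + 1) ≤ (1 - φ n) * μ n + φ n * c) (hca : c < a) :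
    ∀ᶠ n in atTop, μ n < a := by
  obtain ⟨N, hN⟩ := eventually_atTop.1 hrec
  have hsmall : ∀ᶠ n in atTop, (∏ k ∈ Ico N n, (1 - φ k)) * (μ N - c) < a - c := by
    have h := (tendsto_prod_Ico_one_sub_of_not_summable hφ hsum N).mul_const (μ N - c)
    rw [zero_mul] at h
    exact h.eventually_lt_const (sub_pos.2 hca)
  filter_upwards [hsmall, eventually_ge_atTop N] with n hn hNn
  linarith [sub_le_prod_one_sub_mul_sub (fun n => (hφ n).2) hN hNn]

/-- the standard convergence lemma for numerical sequences
`μ_{n+1} ≤ (1 - φ_n) μ_n + φ_n ε_n` with `Σ φ_n = ∞` and `limsup ε_n ≤ 0`. -/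
theorem tendsto_zero_of_recursive_inequality_limsup
    (μ φ ε : ℕ → ℝ)
    (hμ : ∀ n, 0 ≤ μ n)
    (hφ : ∀ n, φ n ∈ Set.Icc (0:ℝ) 1)
    (hsum : ¬ Summable φ)
    (hrec : ∀ n, μ (n + 1) ≤ (1 - φ n) * μ n + φ n * ε n)
    (hε : limsup (fun n => (ε n : EReal)) atTop ≤ 0) :
    Tendsto μ atTop (𝓝 0) := by
  refine tendsto_order.2 ⟨fun a ha => Eventually.of_forall fun n => ha.trans_le (hμ n),
    fun a ha => ?_⟩
  obtain ⟨c, hc0, hca⟩ := exists_between ha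
  have hεc : ∀ᶠ n in atTop, ε n < c :=
    (eventually_lt_of_limsup_lt (hε.trans_lt (EReal.coe_pos.2 hc0))).mono
      fun n hn => EReal.coe_lt_coe_iff.1 hn
  refine eventually_lt_of_eventually_le_one_sub_mul_add hφ hsum ?_ hca
  filter_upwards [hεc] with n hn
  exact (hrec n).trans (by gcongr; exact (hφ n).1)
end

section
/- Let (μ_n) be a sequence of nonnegative real numbers satisfying μ_{n+1} ≤ (1 − φ_n) μ_n + φ_n ε_n for all n, where (φ_n) is a sequence in [0,1] with Σ_{n=1}^∞ φ_n = ∞ and (ε_n) is a real sequence with Σ_{n=1}^∞ φ_n |ε_n| < ∞. Then lim_{n→∞} μ_n = 0. -/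
open Filter Topology

/-- the standard convergence lemma for numerical sequences
`μ_{n+1} ≤ (1 - φ_n) μ_n + φ_n ε_n` with `Σ φ_n = ∞` and `Σ φ_n |ε_n| < ∞`. -/
theorem tendsto_zero_of_recursive_inequality_summable
    (μ φ ε : ℕ → ℝ)
    (hμ : ∀ n, 0 ≤ μ n)
    (hφ : ∀ n, φ n ∈ Set.Icc (0:ℝ) 1)
    (hsum : ¬ Summable φ)
    (hrec : ∀ n, μ (n + 1) ≤ (1 - φ n) * μ n + φ n * ε n)
    (hε : Summable (fun n => φ n * |ε n|)) :
    Tendsto μ atTop (𝓝 0) := by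
  set a : ℕ → ℝ := fun n => φ n * |ε n| with ha
  have ha0 : ∀ n, 0 ≤ a n := fun n => mul_nonneg (hφ n).1 (abs_nonneg _)
  have hta : ∀ n, Summable (fun k => a (k + n)) := fun n =>
    (summable_nat_add_iff n).mpr hε
  set T : ℕ → ℝ := fun n => ∑' k, a (k + n) with hT
  have hT0 : ∀ n, 0 ≤ T n := fun n => tsum_nonneg (fun k => ha0 _)
  have hTrec : ∀ n, T n = a n + T (n + 1) := by
    intro n
    have := Summable.tsum_eq_zero_add (hta n)
    simpa [hT, add_assoc, add_comm, add_left_comm] using this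
  -- key pointwise bound: μ (n+1) ≤ μ n + a n
  have hkey : ∀ n, μ (n + 1) ≤ μ n + a n := by
    intro n
    have h1 : φ n * ε n ≤ a n := mul_le_mul_of_nonneg_left (le_abs_self _) (hφ n).1
    have h2 : 0 ≤ φ n * μ n := mul_nonneg (hφ n).1 (hμ n)
    have := hrec n
    nlinarith
  set ν : ℕ → ℝ := fun n => μ n + T n with hν
  have hanti : Antitone ν := by
    apply antitone_nat_of_succ_le
    intro n
    have := hkey n
    have hTr := hTrec n
    simp only [hν]
    linarith
  have hbdd : BddBelow (Set.range ν) := by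
    refine ⟨0, ?_⟩
    rintro x ⟨n, rfl⟩
    exact add_nonneg (hμ n) (hT0 n)
  set L : ℝ := ⨅ n, ν n with hL
  have hνL : Tendsto ν atTop (𝓝 L) := tendsto_atTop_ciInf hanti hbdd
  have hTzero : Tendsto T atTop (𝓝 0) := tendsto_sum_nat_add a
  have hμL : Tendsto μ atTop (𝓝 L) := by
    have : Tendsto (fun n => ν n - T n) atTop (𝓝 (L - 0)) := hνL.sub hTzero
    simpa [hν] using this
  have hL0 : 0 ≤ L := ge_of_tendsto' hμL hμ
  have hLzero : L = 0 := by
    by_contra h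
    have hLpos : 0 < L := lt_of_le_of_ne hL0 (Ne.symm h)
    have hev : ∀ᶠ n in atTop, L / 2 < μ n :=
      hμL.eventually (eventually_gt_nhds (by linarith))
    obtain ⟨N, hN⟩ := eventually_atTop.mp hev
    have C := ∑' n, a n
    -- inductive bound
    have claim : ∀ m, μ (N + m) + (L / 2) * ∑ k ∈ Finset.range m, φ (N + k)
        ≤ μ N + ∑ k ∈ Finset.range m, a (N + k) := by
      intro m
      induction m with
      | zero => simp
      | succ m ih =>
        have hr := hrec (N + m)
        have hμm : L / 2 ≤ μ (N + m) := le_of_lt (hN _ (Nat.le_add_right _ _))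
        have h1 : φ (N + m) * ε (N + m) ≤ a (N + m) :=
          mul_le_mul_of_nonneg_left (le_abs_self _) (hφ _).1
        have h2 : φ (N + m) * (L / 2) ≤ φ (N + m) * μ (N + m) :=
          mul_le_mul_of_nonneg_left hμm (hφ _).1
        have hstep : μ (N + m + 1) + φ (N + m) * (L / 2) ≤ μ (N + m) + a (N + m) := by
          nlinarith
        rw [Finset.sum_range_succ, Finset.sum_range_succ]
        have : N + (m + 1) = N + m + 1 := by ring
        rw [this]
        linarith
    -- partial sums of φ (N + ·) are bounded, so φ is summable: contradiction
    have hbound : ∀ m, ∑ k ∈ Finset.range m, φ (N + k) ≤ (μ N + ∑' n, a (N + n)) / (L / 2) := by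
      intro m
      have hsa : ∑ k ∈ Finset.range m, a (N + k) ≤ ∑' n, a (N + n) := by
        have hsum' : Summable (fun n => a (N + n)) := by
          have := hta N
          simpa [add_comm] using this
        exact Summable.sum_le_tsum (Finset.range m) (fun i _ => ha0 _) hsum'
      have := claim m
      have hμN := hμ (N + m)
      rw [le_div_iff₀ (by linarith : (0:ℝ) < L / 2)]
      linarith [mul_comm (L / 2) (∑ k ∈ Finset.range m, φ (N + k))]
    have hsφ : Summable (fun k => φ (N + k)) :=
      summable_of_sum_range_le (fun k => (hφ _).1) hbound
    have : Summable φ := by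
      have : Summable (fun k => φ (k + N)) := by simpa [add_comm] using hsφ
      exact (summable_nat_add_iff N).mp this
    exact hsum this
  rw [hLzero] at hμL
  exact hμL
end

section
/- Let (μ_n)_{n∈ℕ} be a sequence of real numbers for which there exists a subsequence (μ_{n_i}) with μ_{n_i} < μ_{n_i + 1} for all i ≥ 0. For n ≥ n_0 define η(n) = max{k ≤ n : μ_k ≤ μ_{k+1}} (which is well defined for all sufficiently large n). Then (η(n))_{n≥n_0} is a nondecreasing sequence with lim_{n→∞} η(n) = ∞, and for all n ≥ n_0 one has μ_{η(n)} ≤ μ_{η(n)+1} and μ_n ≤ μ_{η(n)+1}. -/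
open Filter Topology

/-- Maingé's lemma: if a real sequence `μ` has a subsequence along
which it increases, then the indices `η n = max {k ≤ n : μ k ≤ μ (k+1)}` are well
defined for large `n`, form a nondecreasing sequence tending to `∞`, and satisfy
`μ (η n) ≤ μ (η n + 1)` and `μ n ≤ μ (η n + 1)`. -/
theorem mainge_lemma
    (μ : ℕ → ℝ)
    (h : ∃ φ : ℕ → ℕ, StrictMono φ ∧ ∀ i, μ (φ i) < μ (φ i + 1)) :
    ∃ n₀ : ℕ, ∃ η : ℕ → ℕ,
      -- η n is the largest k ≤ n with μ k ≤ μ (k+1)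
      (∀ n, n₀ ≤ n → η n ≤ n ∧ μ (η n) ≤ μ (η n + 1) ∧
        ∀ k, k ≤ n → μ k ≤ μ (k + 1) → k ≤ η n) ∧
      -- η is nondecreasing (from n₀ on) and tends to infinity
      (∀ m n, n₀ ≤ m → m ≤ n → η m ≤ η n) ∧
      Tendsto η atTop atTop ∧
      (∀ n, n₀ ≤ n → μ n ≤ μ (η n + 1)) := by
  classical
  obtain ⟨φ, hφ, hμφ⟩ := h
  set P : ℕ → Prop := fun k => μ k ≤ μ (k + 1) with hP
  set η : ℕ → ℕ := fun n => Nat.findGreatest P n with hη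
  refine ⟨φ 0, η, ?_, ?_, ?_, ?_⟩
  · intro n hn
    refine ⟨Nat.findGreatest_le n, ?_, fun k hk hk' => Nat.le_findGreatest hk hk'⟩
    exact Nat.findGreatest_spec (P := P) hn (hμφ 0).le
  · intro m n _ hmn
    exact Nat.findGreatest_mono (fun _ h => h) hmn
  · rw [tendsto_atTop_atTop]
    intro N
    refine ⟨φ N, fun n hn => ?_⟩
    calc N ≤ φ N := hφ.le_apply
      _ ≤ η n := Nat.le_findGreatest hn (hμφ N).le
  · intro n hn
    have hspec : P (η n) := Nat.findGreatest_spec (P := P) hn (hμφ 0).le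
    have key : ∀ d, η n + d ≤ n → μ (η n + d) ≤ μ (η n + 1) := by
      intro d
      induction d with
      | zero => intro _; simpa using hspec
      | succ d ih =>
        intro hd
        rcases Nat.eq_zero_or_pos d with rfl | hdpos
        · exact le_refl _
        · have hk : η n < η n + d := by omega
          have hnot : ¬ P (η n + d) :=
            Nat.findGreatest_is_greatest hk (by omega)
          have : μ (η n + d + 1) < μ (η n + d) := lt_of_not_ge hnot
          exact this.le.trans (ih (by omega))
    have hle : η n ≤ n := Nat.findGreatest_le n
    have := key (n - η n) (by omega)
    rwa [Nat.add_sub_cancel' hle] at this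
end

section
/- Let B be a real reflexive Banach space having a weakly sequentially continuous duality mapping J_φ with gauge φ, let C be a nonempty closed convex subset of B, and let T : C → B be a nonexpansive mapping. Then I − T is demiclosed at every point p ∈ B: for any sequence (a_n) in C converging weakly to a with (a_n − T a_n) converging strongly to p, one has a − Ta = p. In particular, taking p = 0, if (a_n) converges weakly to a and ‖a_n − T a_n‖ → 0, then Ta = a. -/
open Filter Topology

set_option maxHeartbeats 1000000 in
lemma weak_null_bounded {B : Type*} [NormedAddCommGroup B] [NormedSpace ℝ B] (a : ℕ → B)
    (h : ∀ f : B →L[ℝ] ℝ, Tendsto (fun n => f (a n)) atTop (𝓝 0)) :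
    ∃ M : ℝ, ∀ n, ‖a n‖ ≤ M := by
  have hpt : ∀ f : StrongDual ℝ B,
      ∃ Cf : ℝ, ∀ n, ‖NormedSpace.inclusionInDoubleDual ℝ B (a n) f‖ ≤ Cf := by
    intro f
    obtain ⟨Cf, hCf⟩ := ((h f).norm).bddAbove_range
    refine ⟨Cf, fun n => ?_⟩
    have h2 : ‖f (a n)‖ ≤ Cf := hCf (Set.mem_range_self n)
    rwa [NormedSpace.dual_def]
  obtain ⟨M, hM⟩ := banach_steinhaus hpt
  refine ⟨M, fun n => ?_⟩
  have h2 : ‖a n‖ = ‖NormedSpace.inclusionInDoubleDual ℝ B (a n)‖ :=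
    ((NormedSpace.inclusionInDoubleDualLi ℝ (E := B)).norm_map (a n)).symm
  rw [h2]
  exact hM n


set_option maxHeartbeats 1000000 in
/-- demiclosedness principle: in a real reflexive Banach space with
a weakly sequentially continuous duality mapping `J_φ` with gauge `φg`, if
`T : C → B` is nonexpansive on the nonempty closed convex set `C`, then `I − T` is
demiclosed at every `p`: if `(a n) ⊆ C` converges weakly to `a` and
`a n − T (a n) → p` strongly, then `a − T a = p`. -/
theorem demiclosedness_principle
    {B : Type*} [NormedAddCommGroup B] [NormedSpace ℝ B] [CompleteSpace B]
    -- reflexivity: the canonical embedding into the bidual is surjective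
    (hRefl : Function.Surjective (NormedSpace.inclusionInDoubleDual ℝ B))
    -- a weakly sequentially continuous (single-valued) duality map with gauge φg
    (φg : ℝ → ℝ) (hφgC : ContinuousOn φg (Set.Ici 0))
    (hφgM : StrictMonoOn φg (Set.Ici 0)) (hφg0 : φg 0 = 0)
    (Jφ : B → B →L[ℝ] ℝ)
    (hJφ : ∀ (x : B) (f : B →L[ℝ] ℝ),
      (f x = ‖x‖ * ‖f‖ ∧ ‖f‖ = φg ‖x‖) ↔ f = Jφ x)
    (hJφw : ∀ (x : ℕ → B) (p : B),
      (∀ f : B →L[ℝ] ℝ, Tendsto (fun n => f (x n)) atTop (𝓝 (f p))) →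
      ∀ y : B, Tendsto (fun n => Jφ (x n) y) atTop (𝓝 (Jφ p y)))
    (C : Set B) (hCne : C.Nonempty) (hCcl : IsClosed C) (hCcv : Convex ℝ C)
    (T : B → B) (hT : ∀ x ∈ C, ∀ y ∈ C, ‖T x - T y‖ ≤ ‖x - y‖)
    (p : B) (a : ℕ → B) (haC : ∀ n, a n ∈ C) (l : B)
    (hweak : ∀ f : B →L[ℝ] ℝ, Tendsto (fun n => f (a n)) atTop (𝓝 (f l)))
    (hstrong : Tendsto (fun n => a n - T (a n)) atTop (𝓝 p)) :
    l - T l = p := by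
  classical
  -- basic facts about φg
  have hφgNN : ∀ t : ℝ, 0 ≤ t → 0 ≤ φg t := by
    intro t ht
    rcases eq_or_lt_of_le ht with h | h
    · simp [← h, hφg0]
    · have := hφgM (Set.self_mem_Ici) (Set.mem_Ici.2 ht) h
      linarith [hφg0 ▸ this]
  have hφgMono : MonotoneOn φg (Set.Ici 0) := hφgM.monotoneOn
  -- `l ∈ C` : closed convex sets are weakly closed
  have hlC : l ∈ C := by
    by_contra hl
    obtain ⟨f, u, hfb, hfl⟩ := geometric_hahn_banach_closed_point hCcv hCcl hl
    have hle : f l ≤ u := le_of_tendsto' (hweak f) (fun n => (hfb (a n) (haC n)).le)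
    linarith
  -- suppose not
  by_contra hne
  set w : B := T l + p with hw
  have hvne : l - w ≠ 0 := by
    intro h
    apply hne
    have h2 : (l - T l) - p = 0 := by
      rw [show (l - T l) - p = l - (T l + p) by abel]; exact h
    exact sub_eq_zero.mp h2
  set v : B := l - w with hv
  set m : B := l - (2⁻¹ : ℝ) • v with hm
  have hlm : l - m = (2⁻¹ : ℝ) • v := by rw [hm]; abel
  have hmw : m - w = (2⁻¹ : ℝ) • v := by
    rw [hm, hv]; module
  -- properties of Jφ
  have hJ : ∀ x : B, Jφ x x = ‖x‖ * ‖Jφ x‖ ∧ ‖Jφ x‖ = φg ‖x‖ :=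
    fun x => (hJφ x (Jφ x)).mpr rfl
  have hJ0 : Jφ (0 : B) = 0 := by
    have := (hJ 0).2
    rw [norm_zero, hφg0] at this
    exact norm_eq_zero.mp this
  -- the primitive Φ of φg
  set Φ : ℝ → ℝ := fun t => ∫ s in (0:ℝ)..t, φg s with hΦ
  have hInt : ∀ a b : ℝ, 0 ≤ a → 0 ≤ b → IntervalIntegrable φg MeasureTheory.volume a b := by
    intro x y hx hy
    apply ContinuousOn.intervalIntegrable
    apply hφgC.mono
    intro s hs
    rcases Set.mem_uIcc.mp hs with ⟨h1, _⟩ | ⟨h1, _⟩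
    · exact le_trans hx h1
    · exact le_trans hy h1
  have hΦsub : ∀ x y : ℝ, 0 ≤ x → 0 ≤ y → Φ y - Φ x = ∫ s in x..y, φg s := by
    intro x y hx hy
    have h := intervalIntegral.integral_add_adjacent_intervals (hInt 0 x le_rfl hx) (hInt x y hx hy)
    simp only [hΦ]
    linarith
  -- the key integral estimates
  have keyLow : ∀ x y : ℝ, 0 ≤ x → 0 ≤ y → φg x * (y - x) ≤ Φ y - Φ x := by
    intro x y hx hy
    rw [hΦsub x y hx hy]
    rcases le_or_gt x y with h | h
    · have h1 : ∫ s in x..y, (φg x) ≤ ∫ s in x..y, φg s := by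
        apply intervalIntegral.integral_mono_on h (intervalIntegrable_const) (hInt x y hx hy)
        intro s hs
        exact hφgMono (Set.mem_Ici.2 hx) (Set.mem_Ici.2 (hx.trans hs.1)) hs.1
      rw [intervalIntegral.integral_const, smul_eq_mul] at h1
      linarith [h1, mul_comm (y - x) (φg x)]
    · have h1 : ∫ s in y..x, φg s ≤ ∫ s in y..x, (φg x) := by
        apply intervalIntegral.integral_mono_on h.le (hInt y x hy hx) (intervalIntegrable_const)
        intro s hs
        exact hφgMono (Set.mem_Ici.2 (hy.trans hs.1)) (Set.mem_Ici.2 hx) hs.2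
      rw [intervalIntegral.integral_const, smul_eq_mul] at h1
      rw [intervalIntegral.integral_symm]
      nlinarith [h1]
  have keyHigh : ∀ x y : ℝ, 0 ≤ x → x ≤ y → Φ y - Φ x ≤ φg y * (y - x) := by
    intro x y hx hxy
    rw [hΦsub x y hx (hx.trans hxy)]
    have h1 : ∫ s in x..y, φg s ≤ ∫ s in x..y, (φg y) := by
      apply intervalIntegral.integral_mono_on hxy (hInt x y hx (hx.trans hxy)) (intervalIntegrable_const)
      intro s hs
      exact hφgMono (Set.mem_Ici.2 (hx.trans hs.1)) (Set.mem_Ici.2 (hx.trans hxy)) hs.2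
    rw [intervalIntegral.integral_const, smul_eq_mul] at h1
    nlinarith [h1]
  have hΦmono : ∀ x y : ℝ, 0 ≤ x → x ≤ y → Φ x ≤ Φ y := by
    intro x y hx hxy
    have := keyLow x y hx (hx.trans hxy)
    nlinarith [hφgNN x hx]
  -- subgradient inequality: Φ‖y‖ ≥ Φ‖x‖ + Jφ x (y - x)
  have hSub : ∀ x y : B, Φ ‖x‖ + Jφ x (y - x) ≤ Φ ‖y‖ := by
    intro x y
    obtain ⟨h1, h2⟩ := hJ x
    have h3 : Jφ x y ≤ φg ‖x‖ * ‖y‖ := by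
      calc Jφ x y ≤ |Jφ x y| := le_abs_self _
        _ = ‖Jφ x y‖ := rfl
        _ ≤ ‖Jφ x‖ * ‖y‖ := (Jφ x).le_opNorm y
        _ = φg ‖x‖ * ‖y‖ := by rw [h2]
    have h4 : Jφ x (y - x) = Jφ x y - Jφ x x := map_sub _ _ _
    have h5 : Jφ x x = ‖x‖ * φg ‖x‖ := by rw [h1, h2]
    have h6 := keyLow ‖x‖ ‖y‖ (norm_nonneg x) (norm_nonneg y)
    nlinarith [h6]
  -- boundedness of the sequence `a n - l` (Banach-Steinhaus)
  obtain ⟨M, hM⟩ : ∃ M : ℝ, ∀ n, ‖a n - l‖ ≤ M := by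
    apply weak_null_bounded (fun n => a n - l)
    intro f
    have : Tendsto (fun n => f (a n) - f l) atTop (𝓝 (f l - f l)) :=
      (hweak f).sub tendsto_const_nhds
    simp only [map_sub, sub_self] at this ⊢
    exact this
  -- the error terms ε n
  set ε : ℕ → ℝ := fun n => ‖a n - T (a n) - p‖ with hε
  have hε0 : Tendsto ε atTop (𝓝 0) := by
    have := (hstrong.sub (tendsto_const_nhds (x := p))).norm
    simpa using this
  have hεnn : ∀ n, 0 ≤ ε n := fun n => norm_nonneg _
  obtain ⟨Eb, hEb⟩ : ∃ Eb : ℝ, ∀ n, ε n ≤ Eb := by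
    obtain ⟨Eb, hEb⟩ := hε0.bddAbove_range
    exact ⟨Eb, fun n => hEb (Set.mem_range_self n)⟩
  set K : ℝ := M + Eb with hK
  have hKn : ∀ n, ‖a n - l‖ + ε n ≤ K := fun n => add_le_add (hM n) (hEb n)
  have hK0 : (0:ℝ) ≤ K := le_trans (by positivity) (hKn 0)
  -- the triangle inequality with nonexpansiveness: ‖a n - w‖ ≤ ε n + ‖a n - l‖
  have htri : ∀ n, ‖a n - w‖ ≤ ε n + ‖a n - l‖ := by
    intro n
    have h1 : a n - w = (a n - T (a n) - p) + (T (a n) - T l) := by rw [hw]; abel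
    calc ‖a n - w‖ = ‖(a n - T (a n) - p) + (T (a n) - T l)‖ := by rw [h1]
      _ ≤ ‖a n - T (a n) - p‖ + ‖T (a n) - T l‖ := norm_add_le _ _
      _ ≤ ε n + ‖a n - l‖ := add_le_add le_rfl (hT (a n) (haC n) l hlC)
  -- (iii):  Φ‖a n - w‖ ≤ Φ‖a n - l‖ + φg K * ε n
  have hiii : ∀ n, Φ ‖a n - w‖ ≤ Φ ‖a n - l‖ + φg K * ε n := by
    intro n
    have h1 : Φ ‖a n - w‖ ≤ Φ (‖a n - l‖ + ε n) := by
      apply hΦmono _ _ (norm_nonneg _)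
      linarith [htri n]
    have h2 : Φ (‖a n - l‖ + ε n) - Φ ‖a n - l‖ ≤ φg (‖a n - l‖ + ε n) * ε n := by
      have := keyHigh ‖a n - l‖ (‖a n - l‖ + ε n) (norm_nonneg _) (by linarith [hεnn n])
      nlinarith
    have h3 : φg (‖a n - l‖ + ε n) ≤ φg K :=
      hφgMono (Set.mem_Ici.2 (by positivity)) (Set.mem_Ici.2 hK0) (hKn n)
    nlinarith [mul_le_mul_of_nonneg_right h3 (hεnn n)]
  -- the sequences g and h
  set g : ℕ → ℝ := fun n => Jφ (a n - m) (m - w) with hg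
  set h : ℕ → ℝ := fun n => Jφ (a n - l) (l - m) with hh
  -- (i) and (ii) give: g n + h n ≤ φg K * ε n
  have hmain : ∀ n, g n + h n ≤ φg K * ε n := by
    intro n
    have h1 := hSub (a n - m) (a n - w)
    have h2 := hSub (a n - l) (a n - m)
    have e1 : (a n - w) - (a n - m) = m - w := by abel
    have e2 : (a n - m) - (a n - l) = l - m := by abel
    rw [e1] at h1
    rw [e2] at h2
    have := hiii n
    simp only [hg, hh]
    linarith
  -- limits of g and h
  have hgw : ∀ f : B →L[ℝ] ℝ, Tendsto (fun n => f (a n - m)) atTop (𝓝 (f (l - m))) := by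
    intro f
    simp only [map_sub]
    exact (hweak f).sub tendsto_const_nhds
  have hhw : ∀ f : B →L[ℝ] ℝ, Tendsto (fun n => f (a n - l)) atTop (𝓝 (f (l - l))) := by
    intro f
    simp only [map_sub]
    exact (hweak f).sub tendsto_const_nhds
  have hgt : Tendsto g atTop (𝓝 (Jφ (l - m) (m - w))) := hJφw _ _ hgw _
  have hht : Tendsto h atTop (𝓝 (Jφ (l - l) (l - m))) := hJφw _ _ hhw _
  have hht0 : Tendsto h atTop (𝓝 0) := by
    have : Jφ (l - l) (l - m) = 0 := by rw [sub_self, hJ0]; simp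
    rwa [this] at hht
  -- compute the limit of g: it is positive
  set c : ℝ := Jφ (l - m) (m - w) with hc
  have hcpos : 0 < c := by
    rw [hc, hlm, hmw]
    obtain ⟨h1, h2⟩ := hJ ((2⁻¹ : ℝ) • v)
    rw [h1, h2]
    have hn0 : 0 < ‖(2⁻¹ : ℝ) • v‖ := by
      rw [norm_pos_iff]
      simp [hvne]
    have : 0 < φg ‖(2⁻¹ : ℝ) • v‖ := by
      have := hφgM Set.self_mem_Ici (Set.mem_Ici.2 hn0.le) hn0
      linarith [hφg0 ▸ this]
    positivity
  -- take limits in hmain to get a contradiction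
  have hδ : Tendsto (fun n => φg K * ε n) atTop (𝓝 0) := by
    simpa using hε0.const_mul (φg K)
  have hsum : Tendsto (fun n => g n + h n) atTop (𝓝 (c + 0)) := hgt.add hht0
  have : c + 0 ≤ 0 := le_of_tendsto_of_tendsto' hsum hδ hmain
  linarith
end

section
/- Let B be a real uniformly convex Banach space, C a nonempty closed convex subset of B, {T_i}_{i≥0} an infinite family of quasi-nonexpansive self-maps of C with F = ⋂_{i≥0} F(T_i) nonempty, and let p ∈ F. Let u, v_1 ∈ C and define (v_n) by w_n = φ_{n,0} v_n + Σ_{i=1}^∞ φ_{n,i} T_i v_n (the series assumed convergent with w_n ∈ C) and v_{n+1} = ξ_n u + (1 − ζ_n) T_0 v_n + (ζ_n − ξ_n) T_0 w_n, with {ζ_n}, {ξ_n} ⊆ [0,1], ξ_n ≤ ζ_n, {φ_{n,i}} ⊆ [0,1] and φ_{n,0} + Σ_{i=1}^∞ φ_{n,i} = 1 for all n. Then ‖w_n − p‖ ≤ ‖v_n − p‖ and ‖v_{n+1} − p‖ ≤ max{‖u − p‖, ‖v_1 − p‖} for every n; in particular the sequences (v_n), (w_n) and (T_i v_n) for each i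 ≥ 0 are bounded. -/
open Filter Topology

/-- boundedness of the Halpern-type iteration for an infinite family
of quasi-nonexpansive mappings: `‖wₙ − p‖ ≤ ‖vₙ − p‖`,
`‖v_{n+1} − p‖ ≤ max {‖u − p‖, ‖v₁ − p‖}`, and the sequences `(vₙ)`, `(wₙ)` and
`(Tᵢ vₙ)` are bounded.  (The initial point `v 0` plays the role of `v₁`.) -/
theorem halpern_type_iteration_bounded
    {B : Type*} [NormedAddCommGroup B] [NormedSpace ℝ B]
    [UniformConvexSpace B] [CompleteSpace B]
    (C : Set B) (hCne : C.Nonempty) (hCcl : IsClosed C) (hCcv : Convex ℝ C)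
    (T : ℕ → B → B) (hTC : ∀ i, Set.MapsTo (T i) C C)
    -- each `T i` is quasi-nonexpansive (nonempty fixed point set in `C`)
    (hQNne : ∀ i, ({a ∈ C | T i a = a} : Set B).Nonempty)
    (hQN : ∀ i, ∀ a ∈ C, ∀ q ∈ ({a ∈ C | T i a = a} : Set B),
      ‖T i a - q‖ ≤ ‖a - q‖)
    (F : Set B) (hF : F = ⋂ i, ({a ∈ C | T i a = a} : Set B)) (hFne : F.Nonempty)
    (p : B) (hp : p ∈ F)
    (u : B) (hu : u ∈ C)
    (ξ ζ : ℕ → ℝ) (φ : ℕ → ℕ → ℝ)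
    (hξ : ∀ n, ξ n ∈ Set.Icc (0:ℝ) 1) (hζ : ∀ n, ζ n ∈ Set.Icc (0:ℝ) 1)
    (hξζ : ∀ n, ξ n ≤ ζ n) (hφ : ∀ n i, φ n i ∈ Set.Icc (0:ℝ) 1)
    (hφ1 : ∀ n, HasSum (fun i => φ n (i+1)) (1 - φ n 0))
    (v w : ℕ → B) (hvC : ∀ n, v n ∈ C) (hwC : ∀ n, w n ∈ C)
    -- wₙ = φ_{n,0} vₙ + ∑_{i=1}^∞ φ_{n,i} Tᵢ vₙ  (convergent series)
    (hw : ∀ n, HasSum (fun i => φ n (i+1) • T (i+1) (v n)) (w n - φ n 0 • v n))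
    -- v_{n+1} = ξₙ u + (1 - ζₙ) T₀ vₙ + (ζₙ - ξₙ) T₀ wₙ
    (hrec : ∀ n, v (n+1) =
      ξ n • u + (1 - ζ n) • T 0 (v n) + (ζ n - ξ n) • T 0 (w n)) :
    (∀ n, ‖w n - p‖ ≤ ‖v n - p‖) ∧
    (∀ n, ‖v (n+1) - p‖ ≤ max ‖u - p‖ ‖v 0 - p‖) ∧
    (∃ M : ℝ, ∀ n, ‖v n‖ ≤ M) ∧
    (∃ M : ℝ, ∀ n, ‖w n‖ ≤ M) ∧
    (∀ i, ∃ M : ℝ, ∀ n, ‖T i (v n)‖ ≤ M) := by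

  have hpmem : ∀ i, p ∈ ({a ∈ C | T i a = a} : Set B) := by
    intro i
    have := hp
    rw [hF] at this
    exact Set.mem_iInter.mp this i
  have hpC : p ∈ C := (hpmem 0).1
  have hpfix : ∀ i, T i p = p := fun i => (hpmem i).2
  -- Step 1
  have key1 : ∀ n, ‖w n - p‖ ≤ ‖v n - p‖ := by
    intro n
    have h0 := hφ n 0
    have hs1 : HasSum (fun i => φ n (i+1) • p) ((1 - φ n 0) • p) := (hφ1 n).smul_const p
    have hs2 : HasSum (fun i => φ n (i+1) • (T (i+1) (v n) - p))
        (w n - φ n 0 • v n - (1 - φ n 0) • p) := by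
      simpa [smul_sub] using (hw n).sub hs1
    have hg : HasSum (fun i => φ n (i+1) * ‖v n - p‖) ((1 - φ n 0) * ‖v n - p‖) :=
      (hφ1 n).mul_right _
    have hb : ∀ i, ‖φ n (i+1) • (T (i+1) (v n) - p)‖ ≤ φ n (i+1) * ‖v n - p‖ := by
      intro i
      rw [norm_smul, Real.norm_eq_abs, abs_of_nonneg (hφ n (i+1)).1]
      exact mul_le_mul_of_nonneg_left
        (hQN (i+1) (v n) (hvC n) p ⟨hpC, hpfix (i+1)⟩) (hφ n (i+1)).1
    have hnorm : ‖w n - φ n 0 • v n - (1 - φ n 0) • p‖ ≤ (1 - φ n 0) * ‖v n - p‖ := by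
      rw [← hs2.tsum_eq]
      exact tsum_of_norm_bounded hg hb
    calc ‖w n - p‖ = ‖φ n 0 • (v n - p) + (w n - φ n 0 • v n - (1 - φ n 0) • p)‖ := by
          congr 1
          module
      _ ≤ ‖φ n 0 • (v n - p)‖ + ‖w n - φ n 0 • v n - (1 - φ n 0) • p‖ := norm_add_le _ _
      _ ≤ φ n 0 * ‖v n - p‖ + (1 - φ n 0) * ‖v n - p‖ := by
          gcongr
          rw [norm_smul, Real.norm_eq_abs, abs_of_nonneg h0.1]
      _ = ‖v n - p‖ := by ring
  -- Step 2
  set M := max ‖u - p‖ ‖v 0 - p‖ with hM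
  have key2 : ∀ n, ‖v n - p‖ ≤ M := by
    intro n
    induction n with
    | zero => exact le_max_right _ _
    | succ n ih =>
      have hwle : ‖w n - p‖ ≤ M := (key1 n).trans ih
      have hTv : ‖T 0 (v n) - p‖ ≤ M :=
        (hQN 0 (v n) (hvC n) p ⟨hpC, hpfix 0⟩).trans ih
      have hTw : ‖T 0 (w n) - p‖ ≤ M :=
        (hQN 0 (w n) (hwC n) p ⟨hpC, hpfix 0⟩).trans hwle
      have hζ1 := hζ n
      have hξ1 := hξ n
      have hd := hξζ n
      have heq : v (n+1) - p =
          ξ n • (u - p) + (1 - ζ n) • (T 0 (v n) - p) + (ζ n - ξ n) • (T 0 (w n) - p) := by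
        rw [hrec n]
        module
      calc ‖v (n+1) - p‖ ≤ ‖ξ n • (u - p) + (1 - ζ n) • (T 0 (v n) - p)‖
            + ‖(ζ n - ξ n) • (T 0 (w n) - p)‖ := by rw [heq]; exact norm_add_le _ _
        _ ≤ (‖ξ n • (u - p)‖ + ‖(1 - ζ n) • (T 0 (v n) - p)‖)
            + ‖(ζ n - ξ n) • (T 0 (w n) - p)‖ := by gcongr; exact norm_add_le _ _
        _ ≤ (ξ n * M + (1 - ζ n) * M) + (ζ n - ξ n) * M := by
            gcongr ?_ + ?_ + ?_ <;>
              rw [norm_smul, Real.norm_eq_abs]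
            · rw [abs_of_nonneg hξ1.1]
              exact mul_le_mul_of_nonneg_left (le_max_left _ _) hξ1.1
            · rw [abs_of_nonneg (by linarith [hζ1.2])]
              exact mul_le_mul_of_nonneg_left hTv (by linarith [hζ1.2])
            · rw [abs_of_nonneg (by linarith)]
              exact mul_le_mul_of_nonneg_left hTw (by linarith)
        _ = M := by ring
  refine ⟨key1, fun n => key2 (n+1), ⟨M + ‖p‖, fun n => ?_⟩, ⟨M + ‖p‖, fun n => ?_⟩,
    fun i => ⟨M + ‖p‖, fun n => ?_⟩⟩
  · calc ‖v n‖ = ‖(v n - p) + p‖ := by rw [sub_add_cancel]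
      _ ≤ ‖v n - p‖ + ‖p‖ := norm_add_le _ _
      _ ≤ M + ‖p‖ := by linarith [key2 n]
  · calc ‖w n‖ = ‖(w n - p) + p‖ := by rw [sub_add_cancel]
      _ ≤ ‖w n - p‖ + ‖p‖ := norm_add_le _ _
      _ ≤ M + ‖p‖ := by linarith [key1 n, key2 n]
  · have : ‖T i (v n) - p‖ ≤ M := (hQN i (v n) (hvC n) p ⟨hpC, hpfix i⟩).trans (key2 n)
    calc ‖T i (v n)‖ = ‖(T i (v n) - p) + p‖ := by rw [sub_add_cancel]
      _ ≤ ‖T i (v n) - p‖ + ‖p‖ := norm_add_le _ _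
      _ ≤ M + ‖p‖ := by linarith
end

section
/- Let B be a real uniformly convex Banach space, C a nonempty closed convex subset of B, {T_i}_{i≥0} an infinite family of quasi-nonexpansive self-maps of C with F = ⋂_{i≥0} F(T_i) nonempty, and let z ∈ F. Let u, v_1 ∈ C and define (v_n) by w_n = φ_{n,0} v_n + Σ_{i=1}^∞ φ_{n,i} T_i v_n (the series assumed convergent with w_n ∈ C) and v_{n+1} = ξ_n u + (1 − ζ_n) T_0 v_n + (ζ_n − ξ_n) T_0 w_n, with {ζ_n}, {ξ_n} ⊆ [0,1], ξ_n ≤ ζ_n, {φ_{n,i}} ⊆ [0,1] and φ_{n,0} + Σ_{i=1}^∞ φ_{n,i} = 1 for all n. Then for every n and every continuous linear functional j_n on B with j_n(v_{n+1} − z) = ‖v_{n+1} − z‖² and ‖j_n‖ = ‖v_{n+1} − z‖ (i.e. j_n ∈ J(v_{n+1} − z) with J the normalized duality mapping), one has ‖v_{n+1} − z‖² ≤ (1 − ξ_n)‖v_n − z‖² + 2 ξ_n · j_n(u − z). -/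
open Filter Topology

/-- the key estimate for the Halpern-type iteration for an infinite
family of quasi-nonexpansive mappings: for every `z` in the common fixed point set
and every `jₙ ∈ J(v_{n+1} − z)` (normalized duality mapping),
`‖v_{n+1} − z‖² ≤ (1 − ξₙ)‖vₙ − z‖² + 2 ξₙ ⟨u − z, jₙ⟩`.
(The initial point `v 0` plays the role of `v₁`.) -/
theorem halpern_type_iteration_key_estimate
    {B : Type*} [NormedAddCommGroup B] [NormedSpace ℝ B]
    [UniformConvexSpace B] [CompleteSpace B]
    (C : Set B) (hCne : C.Nonempty) (hCcl : IsClosed C) (hCcv : Convex ℝ C)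
    (T : ℕ → B → B) (hTC : ∀ i, Set.MapsTo (T i) C C)
    -- each `T i` is quasi-nonexpansive (nonempty fixed point set in `C`)
    (hQNne : ∀ i, ({a ∈ C | T i a = a} : Set B).Nonempty)
    (hQN : ∀ i, ∀ a ∈ C, ∀ q ∈ ({a ∈ C | T i a = a} : Set B),
      ‖T i a - q‖ ≤ ‖a - q‖)
    (F : Set B) (hF : F = ⋂ i, ({a ∈ C | T i a = a} : Set B)) (hFne : F.Nonempty)
    (z : B) (hz : z ∈ F)
    (u : B) (hu : u ∈ C)
    (ξ ζ : ℕ → ℝ) (φ : ℕ → ℕ → ℝ)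
    (hξ : ∀ n, ξ n ∈ Set.Icc (0:ℝ) 1) (hζ : ∀ n, ζ n ∈ Set.Icc (0:ℝ) 1)
    (hξζ : ∀ n, ξ n ≤ ζ n) (hφ : ∀ n i, φ n i ∈ Set.Icc (0:ℝ) 1)
    (hφ1 : ∀ n, HasSum (fun i => φ n (i+1)) (1 - φ n 0))
    (v w : ℕ → B) (hvC : ∀ n, v n ∈ C) (hwC : ∀ n, w n ∈ C)
    -- wₙ = φ_{n,0} vₙ + ∑_{i=1}^∞ φ_{n,i} Tᵢ vₙ  (convergent series)
    (hw : ∀ n, HasSum (fun i => φ n (i+1) • T (i+1) (v n)) (w n - φ n 0 • v n))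
    -- v_{n+1} = ξₙ u + (1 - ζₙ) T₀ vₙ + (ζₙ - ξₙ) T₀ wₙ
    (hrec : ∀ n, v (n+1) =
      ξ n • u + (1 - ζ n) • T 0 (v n) + (ζ n - ξ n) • T 0 (w n)) :
    ∀ n : ℕ, ∀ j : B →L[ℝ] ℝ,
      j (v (n+1) - z) = ‖v (n+1) - z‖ ^ 2 → ‖j‖ = ‖v (n+1) - z‖ →
      ‖v (n+1) - z‖ ^ 2 ≤ (1 - ξ n) * ‖v n - z‖ ^ 2 + 2 * ξ n * j (u - z) := by
  intro n j hj hjn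
  have hzF : ∀ i, z ∈ ({a ∈ C | T i a = a} : Set B) := by
    intro i
    have h := hz
    rw [hF] at h
    exact Set.mem_iInter.mp h i
  have hTz : ∀ i, ∀ a ∈ C, ‖T i a - z‖ ≤ ‖a - z‖ := fun i a ha => hQN i a ha z (hzF i)
  have hφ0 := hφ n 0
  -- series for w n - z
  have hS : HasSum (fun i => φ n (i+1) • (T (i+1) (v n) - z))
      (w n - z - φ n 0 • (v n - z)) := by
    have h1 := (hw n).sub ((hφ1 n).smul_const z)
    have h2 : (fun i => φ n (i+1) • T (i+1) (v n) - φ n (i+1) • z)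
        = fun i => φ n (i+1) • (T (i+1) (v n) - z) := by
      funext i; rw [smul_sub]
    rw [h2] at h1
    convert h1 using 1
    module
  have hS2 : HasSum (fun i => φ n (i+1) * ‖v n - z‖) ((1 - φ n 0) * ‖v n - z‖) :=
    (hφ1 n).mul_right _
  have hterm : ∀ i, ‖φ n (i+1) • (T (i+1) (v n) - z)‖ ≤ φ n (i+1) * ‖v n - z‖ := by
    intro i
    rw [norm_smul, Real.norm_eq_abs, abs_of_nonneg (hφ n (i+1)).1]
    exact mul_le_mul_of_nonneg_left (hTz (i+1) (v n) (hvC n)) (hφ n (i+1)).1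
  have hSnorm : ‖w n - z - φ n 0 • (v n - z)‖ ≤ (1 - φ n 0) * ‖v n - z‖ := by
    have hsummable : Summable (fun i => ‖φ n (i+1) • (T (i+1) (v n) - z)‖) :=
      Summable.of_nonneg_of_le (fun i => norm_nonneg _) hterm hS2.summable
    calc ‖w n - z - φ n 0 • (v n - z)‖ = ‖∑' i, φ n (i+1) • (T (i+1) (v n) - z)‖ := by
          rw [hS.tsum_eq]
      _ ≤ ∑' i, ‖φ n (i+1) • (T (i+1) (v n) - z)‖ := norm_tsum_le_tsum_norm hsummable
      _ ≤ ∑' i, φ n (i+1) * ‖v n - z‖ := Summable.tsum_le_tsum hterm hsummable hS2.summable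
      _ = (1 - φ n 0) * ‖v n - z‖ := hS2.tsum_eq
  have hwb : ‖w n - z‖ ≤ ‖v n - z‖ := by
    have : ‖w n - z‖ ≤ ‖φ n 0 • (v n - z)‖ + ‖w n - z - φ n 0 • (v n - z)‖ := by
      calc ‖w n - z‖ = ‖φ n 0 • (v n - z) + (w n - z - φ n 0 • (v n - z))‖ := by
            congr 1; abel
        _ ≤ _ := norm_add_le _ _
    rw [norm_smul, Real.norm_eq_abs, abs_of_nonneg hφ0.1] at this
    nlinarith [norm_nonneg (v n - z)]
  -- decomposition of v (n+1) - z
  set x := (1 - ζ n) • (T 0 (v n) - z) + (ζ n - ξ n) • (T 0 (w n) - z) with hxdef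
  have hx : v (n+1) - z = ξ n • (u - z) + x := by
    rw [hrec n, hxdef]
    module
  have hxn : ‖x‖ ≤ (1 - ξ n) * ‖v n - z‖ := by
    have h1 : ‖x‖ ≤ (1 - ζ n) * ‖T 0 (v n) - z‖ + (ζ n - ξ n) * ‖T 0 (w n) - z‖ := by
      calc ‖x‖ ≤ ‖(1 - ζ n) • (T 0 (v n) - z)‖ + ‖(ζ n - ξ n) • (T 0 (w n) - z)‖ :=
            norm_add_le _ _
        _ = (1 - ζ n) * ‖T 0 (v n) - z‖ + (ζ n - ξ n) * ‖T 0 (w n) - z‖ := by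
            rw [norm_smul, norm_smul, Real.norm_eq_abs, Real.norm_eq_abs,
              abs_of_nonneg (by linarith [(hζ n).2]), abs_of_nonneg (by linarith [hξζ n])]
    have h2 := hTz 0 (v n) (hvC n)
    have h3 := (hTz 0 (w n) (hwC n)).trans hwb
    nlinarith [(hζ n).2, hξζ n, (hξ n).1, norm_nonneg (v n - z)]
  -- final estimate
  have hje : j (v (n+1) - z) = ξ n * j (u - z) + j x := by
    rw [hx, map_add, map_smul]; rfl
  have hjx : j x ≤ ‖v (n+1) - z‖ * ‖x‖ := by
    calc j x ≤ ‖j x‖ := le_abs_self _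
      _ ≤ ‖j‖ * ‖x‖ := j.le_opNorm x
      _ = ‖v (n+1) - z‖ * ‖x‖ := by rw [hjn]
  have hX : (0:ℝ) ≤ ‖v (n+1) - z‖ := norm_nonneg _
  have hY : (0:ℝ) ≤ ‖v n - z‖ := norm_nonneg _
  have hξ1 := (hξ n).2
  have hξ0 := (hξ n).1
  have h5 : ‖v (n+1) - z‖ * ‖x‖ ≤ ‖v (n+1) - z‖ * ((1 - ξ n) * ‖v n - z‖) :=
    mul_le_mul_of_nonneg_left hxn hX
  have h6 : ‖v (n+1) - z‖ ^ 2 ≤ ξ n * j (u - z) + ‖v (n+1) - z‖ * ((1 - ξ n) * ‖v n - z‖) := by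
    rw [← hj, hje]; linarith
  nlinarith [sq_nonneg (‖v (n+1) - z‖ - (1 - ξ n) * ‖v n - z‖),
    mul_nonneg (mul_nonneg hξ0 (sub_nonneg.2 hξ1)) (sq_nonneg (‖v n - z‖))]
end
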